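/- arXiv:2510.18504 — 2 statements merged into one kernel-verified Lean document; each statement's English description precedes it below -/
import Mathlib

section
/- For every integer m ≥ 1 and every y with −1 < y < 1, the Cauchy principal value integral (1/π)·p.v.∫_{−1}^{1} T_m(η) / ((η − y)·√(1 − η²)) dη equals U_{m−1}(y), i.e. the limit as ε → 0⁺ of (1/π)·∫_{η ∈ [−1,1], |η − y| > ε} T_m(η) / ((η − y)·√(1 − η²)) dη is U_{m−1}(y). -/
/-!
Write `T_m(η) = T_m(y) + (η - y) Q_m(η)` with `Q_m = T_m /ₘ (X - C y)`. An explicit primitive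
shows that the principal value of `1 / ((η - y) √(1 - η²))` vanishes, so the principal value in
question is the ordinary integral of `Q_m(η) / √(1 - η²)`. The three-term recurrence of `T` gives
`Q_{n+2} = 2 T_{n+1} + 2y Q_{n+1} - Q_n`, and `∫ T_{n+1} / √(1 - η²) = 0` because
`-√(1 - η²) U_n / (n + 1)` is a primitive; hence these integrals obey the recurrence of
`π U_{n-1}(y)`.
-/

open Filter MeasureTheory Set Polynomial Polynomial.Chebyshev Real
open scoped Topology

namespace ChebyshevPV

theorem tendsto_setIntegral_inter_lt_abs_sub {E : Type*} [NormedAddCommGroup E]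
    [NormedSpace ℝ E] {μ : Measure ℝ} [NullSingletonClass μ] {s : Set ℝ} {f : ℝ → E}
    (hf : IntegrableOn f s μ) (y : ℝ) :
    Tendsto (fun ε => ∫ x in s ∩ {x | ε < |x - y|}, f x ∂μ) (𝓝 0) (𝓝 (∫ x in s, f x ∂μ)) := by
  have hmeas (ε : ℝ) : MeasurableSet {x : ℝ | ε < |x - y|} :=
    measurableSet_lt measurable_const (by fun_prop)
  simp_rw [← setIntegral_indicator (hmeas _)]
  refine tendsto_integral_filter_of_dominated_convergence (fun x => ‖f x‖)
    (.of_forall fun ε => hf.aestronglyMeasurable.indicator (hmeas ε))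
    (.of_forall fun ε => ae_of_all _ fun x => norm_indicator_le_norm_self _ _) hf.norm ?_
  have hy : ∀ᵐ x ∂μ.restrict s, x ≠ y :=
    ae_restrict_of_ae (compl_mem_ae_iff.2 (measure_singleton y))
  filter_upwards [hy] with x hxy
  refine tendsto_const_nhds.congr' ?_
  filter_upwards [eventually_lt_nhds (abs_sub_pos.2 hxy)] with ε hε
  exact (indicator_of_mem (s := {x | ε < |x - y|}) hε f).symm

noncomputable def semicircle (x : ℝ) : ℝ := √(1 - x ^ 2)

lemma semicircle_nonneg (x : ℝ) : 0 ≤ semicircle x := sqrt_nonneg _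

@[fun_prop]
lemma continuous_semicircle : Continuous semicircle := by unfold semicircle; fun_prop

lemma semicircle_pos {x : ℝ} (h₁ : -1 < x) (h₂ : x < 1) : 0 < semicircle x :=
  sqrt_pos.2 (by nlinarith)

lemma semicircle_sq {x : ℝ} (h₁ : -1 ≤ x) (h₂ : x ≤ 1) : semicircle x ^ 2 = 1 - x ^ 2 :=
  sq_sqrt (by nlinarith)

@[simp] lemma semicircle_one : semicircle 1 = 0 := by simp [semicircle]

@[simp] lemma semicircle_neg_one : semicircle (-1) = 0 := by simp [semicircle]

lemma hasDerivAt_semicircle {x : ℝ} (h₁ : -1 < x) (h₂ : x < 1) :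
    HasDerivAt semicircle (-x / semicircle x) x := by
  have hpos := semicircle_pos h₁ h₂
  have hne : 1 - x ^ 2 ≠ 0 := by nlinarith
  refine ((hasDerivAt_sqrt hne).comp x ((hasDerivAt_pow 2 x).const_sub 1)).congr_deriv ?_
  rw [semicircle] at hpos ⊢
  field_simp
  ring

lemma hasDerivAt_arcsin_eq_inv_semicircle {x : ℝ} (h₁ : -1 < x) (h₂ : x < 1) :
    HasDerivAt arcsin (semicircle x)⁻¹ x := by
  simpa [semicircle] using hasDerivAt_arcsin h₁.ne' h₂.ne

lemma integrableOn_inv_semicircle : IntegrableOn (fun x => (semicircle x)⁻¹) (Icc (-1) 1) := by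
  rw [integrableOn_Icc_iff_integrableOn_Ioc]
  exact intervalIntegral.integrableOn_deriv_right_of_nonneg continuous_arcsin.continuousOn
    (fun x hx => (hasDerivAt_arcsin_eq_inv_semicircle hx.1 hx.2).hasDerivWithinAt)
    (fun x _ => inv_nonneg.2 (semicircle_nonneg x))

lemma integral_inv_semicircle : ∫ x in Icc (-1) 1, (semicircle x)⁻¹ = π := by
  rw [integral_Icc_eq_integral_Ioc, ← intervalIntegral.integral_of_le (by norm_num),
    intervalIntegral.integral_eq_sub_of_hasDeriv_right_of_le (by norm_num)
      continuous_arcsin.continuousOn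
      (fun x hx => (hasDerivAt_arcsin_eq_inv_semicircle hx.1 hx.2).hasDerivWithinAt)
      ((intervalIntegrable_iff_integrableOn_Icc_of_le (by norm_num)).2
        integrableOn_inv_semicircle)]
  simp

lemma integrableOn_div_semicircle {f : ℝ → ℝ} {K : Set ℝ} (hK : IsCompact K)
    (hK₁ : K ⊆ Icc (-1) 1) (hf : ContinuousOn f K) :
    IntegrableOn (fun x => f x / semicircle x) K :=
  (integrableOn_inv_semicircle.mono_set hK₁).continuousOn_mul hf hK

noncomputable def chebyshevIntegral : ℝ[X] →ₗ[ℝ] ℝ where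
  toFun p := ∫ x in Icc (-1) 1, p.eval x / semicircle x
  map_add' p q := by
    simp only [eval_add, add_div]
    exact integral_add (integrableOn_div_semicircle isCompact_Icc subset_rfl p.continuousOn)
      (integrableOn_div_semicircle isCompact_Icc subset_rfl q.continuousOn)
  map_smul' c p := by
    simp only [eval_smul, smul_eq_mul, mul_div_assoc, RingHom.id_apply]
    exact integral_const_mul c _

lemma chebyshevIntegral_apply (p : ℝ[X]) :
    chebyshevIntegral p = ∫ x in Icc (-1) 1, p.eval x / semicircle x := rfl

lemma chebyshevIntegral_one : chebyshevIntegral 1 = π := by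
  simpa [chebyshevIntegral_apply, one_div] using integral_inv_semicircle

lemma hasDerivAt_semicircle_mul_chebyshevU (n : ℕ) {x : ℝ} (h₁ : -1 < x) (h₂ : x < 1) :
    HasDerivAt (fun t => semicircle t * (U ℝ n).eval t)
      (-(n + 1) * (T ℝ (n + 1)).eval x / semicircle x) x := by
  have hpos := semicircle_pos h₁ h₂
  have hsq := semicircle_sq h₁.le h₂.le
  have hT := congrArg (eval x) (add_one_mul_T_eq_poly_in_U (R := ℝ) n)
  simp only [eval_mul, eval_add, eval_intCast, eval_X, eval_sub, eval_one, eval_pow] at hT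
  push_cast at hT
  refine ((hasDerivAt_semicircle h₁ h₂).mul ((U ℝ n).hasDerivAt x)).congr_deriv ?_
  field_simp
  linear_combination hT + eval x (derivative (U ℝ n)) * hsq

lemma chebyshevIntegral_chebyshevT_succ (n : ℕ) : chebyshevIntegral (T ℝ (n + 1)) = 0 := by
  have hcont : Continuous fun t => semicircle t * (U ℝ n).eval t := by fun_prop
  have h := intervalIntegral.integral_eq_sub_of_hasDeriv_right_of_le
    (by norm_num : (-1 : ℝ) ≤ 1) hcont.continuousOn
    (fun x hx => (hasDerivAt_semicircle_mul_chebyshevU n hx.1 hx.2).hasDerivWithinAt)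
    ((intervalIntegrable_iff_integrableOn_Icc_of_le (by norm_num)).2
      (integrableOn_div_semicircle isCompact_Icc subset_rfl
        ((T ℝ (n + 1)).continuousOn.const_smul (-(n + 1 : ℝ)))))
  simp only [semicircle_one, semicircle_neg_one, zero_mul, sub_zero, mul_div_assoc] at h
  rw [intervalIntegral.integral_const_mul, intervalIntegral.integral_of_le (by norm_num),
    ← integral_Icc_eq_integral_Ioc] at h
  rw [chebyshevIntegral_apply]
  have hn : (-(n + 1) : ℝ) ≠ 0 := by linarith
  exact (mul_eq_zero.1 h).resolve_left hn

def pvSet (y ε : ℝ) : Set ℝ := Icc (-1) 1 ∩ {x | ε < |x - y|}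

lemma integrableOn_inv_mul_semicircle {y : ℝ} {K : Set ℝ} (hK : IsCompact K)
    (hK₁ : K ⊆ Icc (-1) 1) (hy : y ∉ K) :
    IntegrableOn (fun x => ((x - y) * semicircle x)⁻¹) K := by
  have hcont : ContinuousOn (fun x => (x - y)⁻¹) K :=
    (continuousOn_id.sub continuousOn_const).inv₀ fun x hx =>
      sub_ne_zero.2 (ne_of_mem_of_not_mem hx hy)
  simpa only [mul_inv, div_eq_mul_inv] using integrableOn_div_semicircle hK hK₁ hcont

lemma integrableOn_pvSet_inv_mul_semicircle (y : ℝ) {ε : ℝ} (hε : 0 < ε) :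
    IntegrableOn (fun x => ((x - y) * semicircle x)⁻¹) (pvSet y ε) := by
  refine (integrableOn_inv_mul_semicircle (K := Icc (-1) 1 ∩ {x | ε ≤ |x - y|})
    (isCompact_Icc.inter_right (isClosed_le continuous_const (by fun_prop))) inter_subset_left
    (fun h => by simpa [hε.not_ge] using h.2)).mono_set ?_
  exact inter_subset_inter_right _ fun x (hx : ε < |x - y|) => hx.le

section Kernel

variable {y : ℝ}

lemma kernelDenom_pos (hy₁ : -1 < y) (hy₂ : y < 1) {t : ℝ} (ht₁ : -1 ≤ t) (ht₂ : t ≤ 1) :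
    0 < 1 - y * t + semicircle y * semicircle t := by
  have hyt : y * t < 1 := by
    nlinarith [mul_pos (by linarith : (0:ℝ) < 1 - y) (by linarith : (0:ℝ) < 1 + y),
      sq_nonneg (y - t), sq_nonneg (y + t)]
  nlinarith [mul_nonneg (semicircle_nonneg y) (semicircle_nonneg t)]

/-- In the variables `t = cos θ`, `y = cos φ` this is
`log |sin ((θ - φ) / 2) / sin ((θ + φ) / 2)| / sin φ`. Since `Real.log (t - y) = log |t - y|`,
it is a primitive of `((t - y) * semicircle t)⁻¹` on both sides of `y`. -/
noncomputable def kernelPrimitive (y t : ℝ) : ℝ :=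
  (log (t - y) - log (1 - y * t + semicircle y * semicircle t)) / semicircle y

lemma kernelPrimitive_one (y : ℝ) : kernelPrimitive y 1 = 0 := by
  simp [kernelPrimitive]

lemma kernelPrimitive_neg_one (y : ℝ) : kernelPrimitive y (-1) = 0 := by
  simp [kernelPrimitive, ← log_neg_eq_log (-1 - y), add_comm]

lemma hasDerivAt_kernelPrimitive (hy₁ : -1 < y) (hy₂ : y < 1) {x : ℝ} (hx₁ : -1 < x)
    (hx₂ : x < 1) (hxy : x ≠ y) :
    HasDerivAt (kernelPrimitive y) ((x - y) * semicircle x)⁻¹ x := by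
  have hsy := semicircle_pos hy₁ hy₂
  have hsx := semicircle_pos hx₁ hx₂
  have hD := kernelDenom_pos hy₁ hy₂ hx₁.le hx₂.le
  have hxy' : x - y ≠ 0 := sub_ne_zero.2 hxy
  have hlog := ((hasDerivAt_id x).sub_const y).log hxy'
  have hlogD := (((hasDerivAt_id x).const_mul y).const_sub 1).add
    ((hasDerivAt_semicircle hx₁ hx₂).const_mul (semicircle y)) |>.log hD.ne'
  refine ((hlog.sub hlogD).div_const (semicircle y)).congr_deriv ?_
  have hsy2 := semicircle_sq hy₁.le hy₂.le
  have hsx2 := semicircle_sq hx₁.le hx₂.le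
  have hD' : 1 - x * y + semicircle y * semicircle x ≠ 0 := by linarith
  simp only [id_eq, Pi.add_apply, mul_one]
  field_simp
  linear_combination -semicircle x * hsy2 + semicircle y * hsx2

lemma intervalIntegral_inv_mul_semicircle (hy₁ : -1 < y) (hy₂ : y < 1) {a b : ℝ} (hab : a ≤ b)
    (ha : -1 ≤ a) (hb : b ≤ 1) (hy : y ∉ Icc a b) :
    ∫ x in a..b, ((x - y) * semicircle x)⁻¹ = kernelPrimitive y b - kernelPrimitive y a := by
  have hsub : Icc a b ⊆ Icc (-1) 1 := Icc_subset_Icc ha hb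
  have hne : ∀ t ∈ Icc a b, t - y ≠ 0 := fun t ht =>
    sub_ne_zero.2 (ne_of_mem_of_not_mem ht hy)
  have hcont : ContinuousOn (kernelPrimitive y) (Icc a b) := by
    refine ContinuousOn.div_const (ContinuousOn.sub ?_ ?_) _
    · exact (continuousOn_id.sub continuousOn_const).log hne
    · refine ContinuousOn.log (by fun_prop) fun t ht => ?_
      exact (kernelDenom_pos hy₁ hy₂ (hsub ht).1 (hsub ht).2).ne'
  refine intervalIntegral.integral_eq_sub_of_hasDerivAt_of_le hab hcont
    (fun x hx => hasDerivAt_kernelPrimitive hy₁ hy₂ (ha.trans_lt hx.1) (hx.2.trans_le hb)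
      (sub_ne_zero.1 (hne x (Ioo_subset_Icc_self hx))))
    ((intervalIntegrable_iff_integrableOn_Icc_of_le hab).2
      (integrableOn_inv_mul_semicircle isCompact_Icc hsub hy))

lemma pvSet_eq_union (hy₁ : -1 < y) (hy₂ : y < 1) {ε : ℝ} (hε : 0 ≤ ε) :
    pvSet y ε = Ico (-1) (y - ε) ∪ Ioc (y + ε) 1 := by
  ext x
  simp only [pvSet, mem_inter_iff, mem_Icc, mem_ofPred_eq, mem_union, mem_Ico, mem_Ioc, lt_abs]
  constructor
  · rintro ⟨⟨hx₁, hx₂⟩, h | h⟩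
    · exact .inr ⟨by linarith, hx₂⟩
    · exact .inl ⟨hx₁, by linarith⟩
  · rintro (⟨hx₁, hx₂⟩ | ⟨hx₁, hx₂⟩)
    · exact ⟨⟨hx₁, by linarith⟩, .inr (by linarith)⟩
    · exact ⟨⟨by linarith, hx₂⟩, .inl (by linarith)⟩

lemma integral_pvSet_inv_mul_semicircle (hy₁ : -1 < y) (hy₂ : y < 1) {ε : ℝ} (hε : 0 < ε)
    (h₁ : -1 ≤ y - ε) (h₂ : y + ε ≤ 1) :
    ∫ x in pvSet y ε, ((x - y) * semicircle x)⁻¹ =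
      kernelPrimitive y (y - ε) - kernelPrimitive y (y + ε) := by
  have hint := integrableOn_pvSet_inv_mul_semicircle y hε
  rw [pvSet_eq_union hy₁ hy₂ hε.le] at hint ⊢
  have hdisj : Disjoint (Ico (-1) (y - ε)) (Ioc (y + ε) 1) :=
    Set.disjoint_left.2 fun x hx hx' => by linarith [hx.2, hx'.1]
  rw [setIntegral_union hdisj measurableSet_Ioc hint.left_of_union hint.right_of_union,
    integral_Ico_eq_integral_Ioo, ← integral_Ioc_eq_integral_Ioo,
    ← intervalIntegral.integral_of_le h₁, ← intervalIntegral.integral_of_le h₂,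
    intervalIntegral_inv_mul_semicircle hy₁ hy₂ h₁ le_rfl (by linarith)
      (fun h => by linarith [h.2]),
    intervalIntegral_inv_mul_semicircle hy₁ hy₂ h₂ (by linarith) le_rfl
      (fun h => by linarith [h.1]),
    kernelPrimitive_one, kernelPrimitive_neg_one]
  ring

lemma tendsto_integral_pvSet_inv_mul_semicircle (hy₁ : -1 < y) (hy₂ : y < 1) :
    Tendsto (fun ε => ∫ x in pvSet y ε, ((x - y) * semicircle x)⁻¹) (𝓝[>] 0) (𝓝 0) := by
  set D : ℝ → ℝ := fun t => 1 - y * t + semicircle y * semicircle t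
  have hDy : D y ≠ 0 := (kernelDenom_pos hy₁ hy₂ hy₁.le hy₂.le).ne'
  have hlim : Tendsto (fun ε => (log (D (y + ε)) - log (D (y - ε))) / semicircle y) (𝓝 0)
      (𝓝 ((log (D (y + 0)) - log (D (y - 0))) / semicircle y)) := by
    refine ((ContinuousAt.log ?_ ?_).sub (ContinuousAt.log ?_ ?_)).div_const _ |>.tendsto <;>
      first | fun_prop | simpa using hDy
  simp only [add_zero, sub_zero, sub_self, zero_div] at hlim
  refine (hlim.mono_left nhdsWithin_le_nhds).congr' ?_
  filter_upwards [Ioo_mem_nhdsGT (lt_min (by linarith : 0 < 1 + y) (by linarith : 0 < 1 - y))]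
    with ε ⟨hε, hεδ⟩
  rw [integral_pvSet_inv_mul_semicircle hy₁ hy₂ hε
    (by linarith [min_le_left (1 + y) (1 - y)]) (by linarith [min_le_right (1 + y) (1 - y)])]
  simp only [kernelPrimitive, sub_sub_cancel_left, add_sub_cancel_left, log_neg_eq_log, D]
  ring

end Kernel

section DividedDifference

variable {R : Type*} [CommRing R]

lemma X_sub_C_mul_divByMonic (p : R[X]) (a : R) :
    (X - C a) * (p /ₘ (X - C a)) = p - C (p.eval a) := by
  rw [X_sub_C_mul_divByMonic_eq_sub_modByMonic, modByMonic_X_sub_C_eq_C_eval]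

lemma divByMonic_X_sub_C_eq_of_mul {p q : R[X]} {a : R}
    (h : (X - C a) * q = p - C (p.eval a)) :
    p /ₘ (X - C a) = q :=
  (monic_X_sub_C a).isRegular.left (show (X - C a) * _ = (X - C a) * q by
    rw [X_sub_C_mul_divByMonic, h])

lemma chebyshevT_add_two_divByMonic (a : R) (n : ℤ) :
    T R (n + 2) /ₘ (X - C a) =
      (2 : R) • T R (n + 1) + (2 * a) • (T R (n + 1) /ₘ (X - C a)) - T R n /ₘ (X - C a) := by
  refine divByMonic_X_sub_C_eq_of_mul ?_
  have hC : C ((T R (n + 2)).eval a) =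
      2 * C a * C ((T R (n + 1)).eval a) - C ((T R n).eval a) := by
    rw [T_add_two]
    simp only [eval_sub, eval_mul, eval_ofNat, eval_X, map_sub, map_mul, map_ofNat]
  simp only [smul_eq_C_mul, map_mul, C_ofNat]
  linear_combination (2 * C a) * X_sub_C_mul_divByMonic (T R (n + 1)) a
    - X_sub_C_mul_divByMonic (T R n) a - T_add_two R n + hC

end DividedDifference

lemma chebyshevIntegral_chebyshevT_divByMonic (a : ℝ) (n : ℕ) :
    chebyshevIntegral (T ℝ n /ₘ (X - C a)) = π * (U ℝ ((n : ℤ) - 1)).eval a := by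
  induction n using Nat.twoStepInduction with
  | zero =>
    rw [divByMonic_X_sub_C_eq_of_mul (q := 0) (by simp)]
    simp
  | one =>
    rw [divByMonic_X_sub_C_eq_of_mul (q := 1) (by simp)]
    simp [chebyshevIntegral_one]
  | more n ih₀ ih₁ =>
    push_cast at ih₁ ⊢
    have hU := U_add_two ℝ ((n : ℤ) - 1)
    rw [show (n : ℤ) - 1 + 2 = n + 2 - 1 by ring,
      show (n : ℤ) - 1 + 1 = n + 1 - 1 by ring] at hU
    rw [chebyshevT_add_two_divByMonic, map_sub, map_add, map_smul, map_smul,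
      chebyshevIntegral_chebyshevT_succ, ih₀, ih₁, hU]
    simp only [eval_sub, eval_mul, eval_X, eval_ofNat, smul_eq_mul]
    ring

theorem tendsto_integral_pvSet_eval_div {y : ℝ} (hy₁ : -1 < y) (hy₂ : y < 1) (p : ℝ[X]) :
    Tendsto (fun ε => ∫ x in pvSet y ε, p.eval x / ((x - y) * semicircle x)) (𝓝[>] 0)
      (𝓝 (chebyshevIntegral (p /ₘ (X - C y)))) := by
  set q := p /ₘ (X - C y)
  have hsplit {x : ℝ} (hxy : x ≠ y) : p.eval x / ((x - y) * semicircle x) =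
      p.eval y * ((x - y) * semicircle x)⁻¹ + q.eval x / semicircle x := by
    have hq := congrArg (eval x) (X_sub_C_mul_divByMonic p y)
    simp only [eval_mul, eval_sub, eval_X, eval_C] at hq
    rcases eq_or_ne (semicircle x) 0 with hs | hs
    · simp [hs]
    · have hxy' : x - y ≠ 0 := sub_ne_zero.2 hxy
      field_simp
      linear_combination -hq
  have hq : IntegrableOn (fun x => q.eval x / semicircle x) (Icc (-1) 1) :=
    integrableOn_div_semicircle isCompact_Icc subset_rfl q.continuousOn
  have hlim := ((tendsto_integral_pvSet_inv_mul_semicircle hy₁ hy₂).const_mul (p.eval y)).add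
    ((tendsto_setIntegral_inter_lt_abs_sub hq y).mono_left nhdsWithin_le_nhds)
  rw [mul_zero, zero_add] at hlim
  refine hlim.congr' ?_
  filter_upwards [self_mem_nhdsWithin] with ε (hε : 0 < ε)
  change _ + ∫ x in pvSet y ε, _ = _
  rw [← integral_const_mul, ← integral_add
    ((integrableOn_pvSet_inv_mul_semicircle y hε).const_mul _) (hq.mono_set inter_subset_left)]
  refine setIntegral_congr_fun
    (measurableSet_Icc.inter (measurableSet_lt measurable_const (by fun_prop))) fun x hx => ?_
  exact (hsplit fun h => by simpa [h, hε.not_gt] using hx.2).symm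

end ChebyshevPV

theorem stmt2_general (m : ℕ) (y : ℝ) (hy₁ : -1 < y) (hy₂ : y < 1) :
    Tendsto
      (fun ε : ℝ =>
        (1 / Real.pi) *
          ∫ η in Set.Icc (-1 : ℝ) 1 ∩ {η : ℝ | ε < |η - y|},
            (Polynomial.Chebyshev.T ℝ m).eval η /
              ((η - y) * Real.sqrt (1 - η ^ 2)))
      (𝓝[>] 0)
      (𝓝 ((Polynomial.Chebyshev.U ℝ (m - 1)).eval y)) := by
  have h := (ChebyshevPV.tendsto_integral_pvSet_eval_div hy₁ hy₂ (T ℝ m)).const_mul (1 / π)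
  rwa [ChebyshevPV.chebyshevIntegral_chebyshevT_divByMonic, ← mul_assoc,
    one_div_mul_cancel pi_ne_zero, one_mul] at h

/-- Spectral relation for the Cauchy singular kernel with Chebyshev weight:
for `m ≥ 1` and `-1 < y < 1`,
`(1/π)·p.v.∫_{-1}^{1} T_m(η)/((η - y)√(1-η²)) dη = U_{m-1}(y)`,
the principal value being the limit as `ε → 0⁺` of the integral over
`{η ∈ [-1,1] : |η - y| > ε}`. -/
theorem stmt2 (m : ℕ) (hm : 1 ≤ m) (y : ℝ) (hy₁ : -1 < y) (hy₂ : y < 1) :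
    Tendsto
      (fun ε : ℝ =>
        (1 / Real.pi) *
          ∫ η in Set.Icc (-1 : ℝ) 1 ∩ {η : ℝ | ε < |η - y|},
            (Polynomial.Chebyshev.T ℝ m).eval η /
              ((η - y) * Real.sqrt (1 - η ^ 2)))
      (𝓝[>] 0)
      (𝓝 ((Polynomial.Chebyshev.U ℝ (m - 1)).eval y)) :=
  stmt2_general m y hy₁ hy₂
end

section
/- Let R : ℕ × ℕ → ℂ (indexed by n, m ≥ 1) satisfy Σ_{n=1}^∞ Σ_{m=1}^∞ |R_{nm}|² < ∞, let f ∈ ℓ²(ℕ, ℂ), and suppose the operator A on ℓ² defined by (Aa)_n = a_n + Σ_{m=1}^∞ R_{nm} a_m is bijective, with a = A⁻¹f. Then there exists N₀ such that for every N ≥ N₀ the finite truncated system x_n + Σ_{m=1}^{N} R_{nm} x_m = f_n (1 ≤ n ≤ N) has a unique solution (a_1^N, …, a_N^N), and the sequences ā^N = (a_1^N, …, a_N^N, 0, 0, …) converge to a in the ℓ² norm as N → ∞. -/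
/-!
A square-summable kernel `S` acts on `ℓ²` by `(K_S b)ₙ = ∑ₘ S(n,m) bₘ` with `‖K_S‖ ≤ ‖S‖_{ℓ²(ℕ×ℕ)}`
(Cauchy–Schwarz row by row), and `S ↦ K_S` is linear. Cutting `R` off to `[0,N)²` is a convergent
approximation in `ℓ²(ℕ×ℕ)`, so `A_N = 1 + K_{R_N} → A = 1 + K_R` in operator norm. Since `A` is
invertible and the units of a Banach algebra form an open set on which inversion is continuous,
`A_N` is invertible for large `N` and `A_N⁻¹ (P_N f) → A⁻¹ f = a`, where `P_N` is the cut-off to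
`[0,N)`. Finally `A_N` preserves sequences supported in `[0,N)`, and on them `A_N x = P_N f` is
exactly the `N × N` truncated system.
-/

open Filter Topology Finset

noncomputable section

namespace lp

variable {α : Type*} {E : α → Type*} [∀ i, NormedAddCommGroup (E i)]

theorem memℓp_two_iff {f : ∀ i, E i} : Memℓp f 2 ↔ Summable fun i => ‖f i‖ ^ 2 := by
  rw [memℓp_gen_iff (by norm_num)]
  norm_num

theorem summable_norm_sq (f : lp E 2) : Summable fun i => ‖f i‖ ^ 2 :=
  memℓp_two_iff.1 f.2

theorem norm_sq_eq_tsum (f : lp E 2) : ‖f‖ ^ 2 = ∑' i, ‖f i‖ ^ 2 := by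
  simpa using lp.norm_rpow_eq_tsum (p := 2) (by norm_num) f

theorem norm_eq_sqrt_tsum (f : lp E 2) : ‖f‖ = √(∑' i, ‖f i‖ ^ 2) := by
  rw [← norm_sq_eq_tsum, Real.sqrt_sq (norm_nonneg _)]

section Truncate

variable [DecidableEq α] {p : ENNReal}

def truncate (s : Finset α) (f : lp E p) : lp E p := ∑ i ∈ s, lp.single p i (f i)

theorem truncate_apply (s : Finset α) (f : lp E p) (i : α) :
    truncate s f i = if i ∈ s then f i else 0 := by
  simp only [truncate, coeFn_sum, Finset.sum_apply, lp.single_apply, Finset.sum_pi_single]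

theorem tendsto_truncate [Fact (1 ≤ p)] (hp : p ≠ ⊤) (f : lp E p) {β : Type*} {l : Filter β}
    {s : β → Finset α} (hs : Tendsto s l atTop) : Tendsto (fun b => truncate (s b) f) l (𝓝 f) :=
  (lp.hasSum_single hp f).comp hs

end Truncate

section Kernel

open scoped ComplexConjugate InnerProductSpace

variable {𝕜 : Type*} [RCLike 𝕜] {ι κ : Type*}

/-- Rows are conjugated so that the kernel acts by `(K b) i = ⟪kernelRow S i, b⟫`. -/
def kernelRow (S : ℓ²(ι × κ, 𝕜)) (i : ι) : ℓ²(κ, 𝕜) :=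
  ⟨fun j => conj (S (i, j)), memℓp_two_iff.2 (by simpa using (summable_norm_sq S).prod_factor i)⟩

theorem norm_kernelRow_sq (S : ℓ²(ι × κ, 𝕜)) (i : ι) :
    ‖kernelRow S i‖ ^ 2 = ∑' j, ‖S (i, j)‖ ^ 2 := by
  simp [norm_sq_eq_tsum, kernelRow]

theorem kernelRow_add (S T : ℓ²(ι × κ, 𝕜)) (i : ι) :
    kernelRow (S + T) i = kernelRow S i + kernelRow T i := by
  ext j; exact map_add (starRingEnd 𝕜) _ _

theorem kernelRow_smul (c : 𝕜) (S : ℓ²(ι × κ, 𝕜)) (i : ι) :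
    kernelRow (c • S) i = conj c • kernelRow S i := by
  ext j; simp [kernelRow]

theorem inner_kernelRow (S : ℓ²(ι × κ, 𝕜)) (b : ℓ²(κ, 𝕜)) (i : ι) :
    ⟪kernelRow S i, b⟫_𝕜 = ∑' j, S (i, j) * b j := by
  simp [inner_eq_tsum, kernelRow, mul_comm]

theorem tsum_norm_inner_kernelRow_sq_le (S : ℓ²(ι × κ, 𝕜)) (b : ℓ²(κ, 𝕜)) :
    (Summable fun i => ‖⟪kernelRow S i, b⟫_𝕜‖ ^ 2) ∧
      (∑' i, ‖⟪kernelRow S i, b⟫_𝕜‖ ^ 2) ≤ ‖S‖ ^ 2 * ‖b‖ ^ 2 := by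
  have hle (i : ι) : ‖⟪kernelRow S i, b⟫_𝕜‖ ^ 2 ≤ ‖kernelRow S i‖ ^ 2 * ‖b‖ ^ 2 := by
    rw [← mul_pow]; gcongr; exact norm_inner_le_norm _ _
  have hrows : HasSum (fun i => ‖kernelRow S i‖ ^ 2 * ‖b‖ ^ 2) (‖S‖ ^ 2 * ‖b‖ ^ 2) := by
    simp only [norm_kernelRow_sq, norm_sq_eq_tsum S]
    rw [(summable_norm_sq S).tsum_prod]
    exact ((summable_norm_sq S).prod).hasSum.mul_right _
  have hsum := hrows.summable.of_nonneg_of_le (fun i => by positivity) hle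
  exact ⟨hsum, hrows.tsum_eq ▸ hsum.tsum_le_tsum hle hrows.summable⟩

def kernelVec (S : ℓ²(ι × κ, 𝕜)) (b : ℓ²(κ, 𝕜)) : ℓ²(ι, 𝕜) :=
  ⟨fun i => ⟪kernelRow S i, b⟫_𝕜, memℓp_two_iff.2 (tsum_norm_inner_kernelRow_sq_le S b).1⟩

@[simp]
theorem kernelVec_apply (S : ℓ²(ι × κ, 𝕜)) (b : ℓ²(κ, 𝕜)) (i : ι) :
    kernelVec S b i = ⟪kernelRow S i, b⟫_𝕜 :=
  rfl

theorem norm_kernelVec_le (S : ℓ²(ι × κ, 𝕜)) (b : ℓ²(κ, 𝕜)) :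
    ‖kernelVec S b‖ ≤ ‖S‖ * ‖b‖ := by
  rw [← pow_le_pow_iff_left₀ (norm_nonneg _) (by positivity) two_ne_zero, mul_pow,
    norm_sq_eq_tsum]
  exact (tsum_norm_inner_kernelRow_sq_le S b).2

def kernelOp : ℓ²(ι × κ, 𝕜) →L[𝕜] ℓ²(κ, 𝕜) →L[𝕜] ℓ²(ι, 𝕜) :=
  LinearMap.mkContinuous₂
    (LinearMap.mk₂ 𝕜 kernelVec
      (fun S T b => by ext i; simp [kernelRow_add, inner_add_left])
      (fun c S b => by ext i; simp [kernelRow_smul, inner_smul_left])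
      (fun S b c => by ext i; simp [inner_add_right])
      (fun S c b => by ext i; simp [inner_smul_right]))
    1 (fun S b => by simpa using norm_kernelVec_le S b)

theorem kernelOp_apply (S : ℓ²(ι × κ, 𝕜)) (b : ℓ²(κ, 𝕜)) (i : ι) :
    kernelOp S b i = ∑' j, S (i, j) * b j :=
  inner_kernelRow S b i

theorem kernelOp_truncate_product_apply [DecidableEq ι] [DecidableEq κ] (s : Finset ι)
    (t : Finset κ) (S : ℓ²(ι × κ, 𝕜)) (b : ℓ²(κ, 𝕜)) (i : ι) :
    kernelOp (truncate (s ×ˢ t) S) b i = if i ∈ s then ∑ j ∈ t, S (i, j) * b j else 0 := by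
  rw [kernelOp_apply]
  by_cases hi : i ∈ s
  · simp only [truncate_apply, mem_product, hi, true_and, if_true, ite_mul, zero_mul]
    exact (tsum_eq_sum fun j hj => if_neg hj).trans (sum_congr rfl fun j hj => if_pos hj)
  · simp [truncate_apply, hi]

end Kernel

end lp

section RingInverse

variable {𝕜 E : Type*} [NontriviallyNormedField 𝕜] [NormedAddCommGroup E] [NormedSpace 𝕜 E]

namespace ContinuousLinearMap

theorem ringInverse_apply_apply {T : E →L[𝕜] E} (hT : IsUnit T) (x : E) :
    Ring.inverse T (T x) = x := by
  change (Ring.inverse T * T) x = x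
  rw [Ring.inverse_mul_cancel T hT]
  rfl

theorem apply_ringInverse_apply {T : E →L[𝕜] E} (hT : IsUnit T) (y : E) :
    T (Ring.inverse T y) = y := by
  change (T * Ring.inverse T) y = y
  rw [Ring.mul_inverse_cancel T hT]
  rfl

theorem tendsto_ringInverse_apply [CompleteSpace E] {α : Type*} {l : Filter α}
    {T : α → E →L[𝕜] E} {T₀ : E →L[𝕜] E} (hT₀ : IsUnit T₀) (hT : Tendsto T l (𝓝 T₀))
    {y : α → E} {y₀ : E} (hy : Tendsto y l (𝓝 y₀)) :
    Tendsto (fun a => Ring.inverse (T a) (y a)) l (𝓝 (Ring.inverse T₀ y₀)) := by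
  obtain ⟨U, rfl⟩ := hT₀
  exact (isBoundedBilinearMap_apply.continuous.tendsto _).comp
    (((NormedRing.inverse_continuousAt U).tendsto.comp hT).prodMk_nhds hy)

end ContinuousLinearMap

end RingInverse

open scoped lp
open lp ContinuousLinearMap

section FinExtend

variable {E : Type*} [NormedAddCommGroup E]

def extendByZero (N : ℕ) (x : Fin N → E) : ℓ²(ℕ, E) :=
  ⟨fun n => if h : n < N then x ⟨n, h⟩ else 0, memℓp_two_iff.2 <|
    summable_of_ne_finset_zero (s := range N) fun n hn => by simp_all⟩

theorem extendByZero_apply (N : ℕ) (x : Fin N → E) (n : ℕ) :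
    extendByZero N x n = if h : n < N then x ⟨n, h⟩ else 0 :=
  rfl

@[simp]
theorem extendByZero_apply_fin (N : ℕ) (x : Fin N → E) (i : Fin N) : extendByZero N x i = x i := by
  simp [extendByZero_apply]

theorem extendByZero_injective (N : ℕ) : Function.Injective (extendByZero (E := E) N) := by
  intro x y hxy
  funext i
  simpa [extendByZero_apply] using congr($hxy i)

theorem eq_extendByZero_of_forall_le_apply_eq_zero {N : ℕ} {u : ℓ²(ℕ, E)}
    (hu : ∀ n, N ≤ n → u n = 0) : u = extendByZero N fun i => u i := by
  ext n
  rw [extendByZero_apply]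
  split_ifs with h
  · rfl
  · exact hu n (not_lt.1 h)

end FinExtend

section TruncatedSystem

variable {𝕜 : Type*} [RCLike 𝕜]

def truncatedOperator (S : ℓ²(ℕ × ℕ, 𝕜)) (N : ℕ) : ℓ²(ℕ, 𝕜) →L[𝕜] ℓ²(ℕ, 𝕜) :=
  1 + kernelOp (truncate (range N ×ˢ range N) S)

theorem truncatedOperator_apply (S : ℓ²(ℕ × ℕ, 𝕜)) (N : ℕ) (b : ℓ²(ℕ, 𝕜)) (n : ℕ) :
    truncatedOperator S N b n = b n + if n < N then ∑ m ∈ range N, S (n, m) * b m else 0 := by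
  simp [truncatedOperator, kernelOp_truncate_product_apply]

theorem tendsto_truncatedOperator (S : ℓ²(ℕ × ℕ, 𝕜)) :
    Tendsto (truncatedOperator S) atTop (𝓝 (1 + kernelOp S)) := by
  have hsquares : Tendsto (fun N => range N ×ˢ range N) atTop atTop :=
    tendsto_finsetProd_atTop.comp <|
      (tendsto_finset_range.prodMk tendsto_finset_range).mono_right prod_atTop_atTop_eq.le
  exact ((kernelOp (𝕜 := 𝕜)).continuous.tendsto S |>.comp
    (tendsto_truncate (by simp) S hsquares)).const_add 1

theorem truncatedOperator_extendByZero_eq_iff (S : ℓ²(ℕ × ℕ, 𝕜)) (f : ℓ²(ℕ, 𝕜)) {N : ℕ}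
    (x : Fin N → 𝕜) :
    truncatedOperator S N (extendByZero N x) = truncate (range N) f ↔
      ∀ n : Fin N, x n + ∑ m : Fin N, S (n, m) * x m = f n := by
  have hsum (n : ℕ) :
      ∑ m ∈ range N, S (n, m) * extendByZero N x m = ∑ m : Fin N, S (n, m) * x m := by
    simp [← Fin.sum_univ_eq_sum_range]
  constructor
  · intro h n
    simpa [truncatedOperator_apply, truncate_apply, hsum] using congr($h n)
  · intro h
    ext n
    by_cases hn : n < N
    · lift n to Fin N using hn
      simpa [truncatedOperator_apply, truncate_apply, hsum] using h n
    · simp [truncatedOperator_apply, truncate_apply, extendByZero_apply, hn]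

theorem extendByZero_eq_ringInverse {S : ℓ²(ℕ × ℕ, 𝕜)} {f : ℓ²(ℕ, 𝕜)} {N : ℕ}
    (hN : IsUnit (truncatedOperator S N)) {x : Fin N → 𝕜}
    (hx : ∀ n : Fin N, x n + ∑ m : Fin N, S (n, m) * x m = f n) :
    extendByZero N x = Ring.inverse (truncatedOperator S N) (truncate (range N) f) := by
  rw [← (truncatedOperator_extendByZero_eq_iff S f x).2 hx, ringInverse_apply_apply hN]

theorem existsUnique_truncatedSystem {S : ℓ²(ℕ × ℕ, 𝕜)} (f : ℓ²(ℕ, 𝕜)) {N : ℕ}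
    (hN : IsUnit (truncatedOperator S N)) :
    ∃! x : Fin N → 𝕜, ∀ n : Fin N, x n + ∑ m : Fin N, S (n, m) * x m = f n := by
  set u := Ring.inverse (truncatedOperator S N) (truncate (range N) f)
  have hu : truncatedOperator S N u = truncate (range N) f := apply_ringInverse_apply hN _
  have hu_supp : u = extendByZero N fun i => u i :=
    eq_extendByZero_of_forall_le_apply_eq_zero fun n hn => by
      simpa [truncatedOperator_apply, truncate_apply, not_lt.2 hn] using congr($hu n)
  refine ⟨fun i => u i, ?_, fun y hy => extendByZero_injective N ?_⟩
  · exact (truncatedOperator_extendByZero_eq_iff S f _).1 (by rw [← hu_supp, hu])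
  · rw [← hu_supp, extendByZero_eq_ringInverse hN hy]

end TruncatedSystem

/-- Reduction (truncation) method for the infinite system `a + Ra = f` in `ℓ²`:
if `∑_{n,m}|R_{nm}|² < ∞` and the operator `A a = a + Ra` is bijective on `ℓ²`
with `A a = f`, then for all sufficiently large `N` the truncated `N × N`
system has a unique solution, and the zero-extended truncated solutions
converge to `a` in the `ℓ²` norm. -/
theorem stmt10 (R : ℕ × ℕ → ℂ)
    (hR : Summable (fun p : ℕ × ℕ => ‖R p‖ ^ 2))
    (f : lp (fun _ : ℕ => ℂ) 2)
    (A : lp (fun _ : ℕ => ℂ) 2 → lp (fun _ : ℕ => ℂ) 2)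
    (hA : ∀ (b : lp (fun _ : ℕ => ℂ) 2) (n : ℕ),
      A b n = b n + ∑' m : ℕ, R (n, m) * b m)
    (hbij : Function.Bijective A)
    (a : lp (fun _ : ℕ => ℂ) 2) (ha : A a = f) :
    ∃ N₀ : ℕ,
      (∀ N : ℕ, N₀ ≤ N →
        ∃! x : Fin N → ℂ,
          ∀ n : Fin N, x n + ∑ m : Fin N, R (n, m) * x m = f n) ∧
      (∀ ε : ℝ, 0 < ε → ∃ N₁ : ℕ, N₀ ≤ N₁ ∧
        ∀ N : ℕ, N₁ ≤ N →
          ∀ x : Fin N → ℂ,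
            (∀ n : Fin N, x n + ∑ m : Fin N, R (n, m) * x m = f n) →
            Real.sqrt (∑' n : ℕ,
                ‖(if h : n < N then x ⟨n, h⟩ else 0) - a n‖ ^ 2)
              < ε) := by
  set K : ℓ²(ℕ × ℕ, ℂ) := ⟨R, memℓp_two_iff.2 hR⟩
  have hA_eq : A = ⇑(1 + kernelOp K) := funext fun b => lp.ext <| funext fun n => by
    simp [hA, kernelOp_apply, K]
  have hunit : IsUnit (1 + kernelOp K) := isUnit_iff_bijective.2 (hA_eq ▸ hbij)
  have hlim := tendsto_truncatedOperator K
  obtain ⟨N₀, hN₀⟩ := eventually_atTop.1 (hlim.eventually (Units.isOpen.mem_nhds hunit))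
  have happrox : Tendsto (fun N => Ring.inverse (truncatedOperator K N) (truncate (range N) f))
      atTop (𝓝 a) := by
    have hinv : Ring.inverse (1 + kernelOp K) f = a := by
      rw [← ha, hA_eq, ringInverse_apply_apply hunit]
    simpa only [hinv] using
      tendsto_ringInverse_apply hunit hlim (tendsto_truncate (by simp) f tendsto_finset_range)
  refine ⟨N₀, fun N hN => existsUnique_truncatedSystem f (hN₀ N hN), fun ε hε => ?_⟩
  obtain ⟨N₁, hN₁⟩ := Metric.tendsto_atTop.1 happrox ε hε
  refine ⟨max N₀ N₁, le_max_left _ _, fun N hN x hx => ?_⟩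
  have hdist : √(∑' n, ‖(if h : n < N then x ⟨n, h⟩ else 0) - a n‖ ^ 2) =
      dist (extendByZero N x) a := by
    simp [dist_eq_norm, norm_eq_sqrt_tsum, extendByZero_apply]
  rw [hdist, extendByZero_eq_ringInverse (hN₀ N (le_of_max_le_left hN)) hx]
  exact hN₁ N (le_of_max_le_right hN)
end
end
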